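/- arXiv:1010.4063 — 4 statements merged into one kernel-verified Lean document; each statement's English description precedes it below -/
import Mathlib

section
/- If 0 < α < 1/2, then the sequence p_n := p_n^{1,1} = P(S_{n+1} > S'_n), n = 0, 1, 2, …, is strictly increasing and strictly concave, i.e. p_{n+1} > p_n for all n and p_{n+2} − p_{n+1} < p_{n+1} − p_n for all n. -/
/-!
Write `w_n` for the `Bin(n, α)` weights and `E_n = ∑ᵢ w_n(i)² = P(S_n = S'_n)`. Conditioning on the
last trial of `S_{n+1}` and using the symmetry `P(S_n > S'_n) = P(S_n < S'_n)` gives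
`p_n = 1/2 - (1/2 - α) E_n`, so it suffices that `E_n` is strictly decreasing and strictly convex.
With `c_n(m) = ∑ᵢ w_n(i) w_n(i + m)`, Pascal's rule gives
`E_{n+1} - E_n = -2α(1-α) (c_n(0) - c_n(1))` and
`E_{n+2} - 2E_{n+1} + E_n = 2(α(1-α))² (3c_n(0) - 4c_n(1) + c_n(2))`.
Twice each bracket is the sum of squares of the first, resp. second, differences of the sequence
`w_n` padded by zeros on the left, and is positive because it contains the term `w_n(0)²`.
-/

open Finset Filter Topology

/-- `p α r d n = P(S_{n+r} ≥ S'_n + d)` for independent binomials with success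
probability `α`, given by its explicit combinatorial formula. -/
noncomputable def competeProb (α : ℝ) (r d n : ℕ) : ℝ :=
  ∑ i ∈ Finset.range (n + 1), ∑ j ∈ Finset.Icc (i + d) (n + r),
    ((n + r).choose j : ℝ) * (n.choose i : ℝ) * α ^ (i + j) * (1 - α) ^ (2 * n + r - i - j)

section Autocorrelation

def autocorr (f : ℕ → ℝ) (N m : ℕ) : ℝ := ∑ i ∈ range N, f i * f (i + m)

variable {f : ℕ → ℝ} {N : ℕ}

theorem autocorr_add_of_eq_zero (hf : ∀ i ≥ N, f i = 0) (k m : ℕ) :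
    autocorr f (N + k) m = autocorr f N m :=
  eventually_constant_sum (fun i hi => by simp [hf i hi]) (N.le_add_right k)

theorem sum_range_shift_mul_eq (hf : ∀ i ≥ N, f i = 0) (k m : ℕ) :
    ∑ i ∈ range N, f (i + k) * f (i + k + m) =
      autocorr f N m - ∑ i ∈ range k, f i * f (i + m) := by
  rw [← autocorr_add_of_eq_zero hf k m, add_comm N, autocorr, sum_range_add]
  simp only [add_comm k]
  ring

theorem two_mul_autocorr_zero_sub_one (hf : ∀ i ≥ N, f i = 0) :
    2 * (autocorr f N 0 - autocorr f N 1) =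
      f 0 ^ 2 + ∑ i ∈ range N, (f i - f (i + 1)) ^ 2 := by
  have h₁₀ := sum_range_shift_mul_eq hf 1 0
  rw [sum_range_one] at h₁₀
  have expand : ∀ i, (f i - f (i + 1)) ^ 2 =
      f i * f (i + 0) + f (i + 1) * f (i + 1 + 0) - 2 * (f i * f (i + 1)) :=
    fun i => by ring_nf
  rw [sum_congr rfl fun i _ => expand i, sum_sub_distrib, sum_add_distrib, ← mul_sum, h₁₀]
  simp only [autocorr]
  ring

theorem two_mul_autocorr_secondDiff (hf : ∀ i ≥ N, f i = 0) :
    2 * (3 * autocorr f N 0 - 4 * autocorr f N 1 + autocorr f N 2) =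
      f 0 ^ 2 + (f 1 - 2 * f 0) ^ 2 +
        ∑ i ∈ range N, (f i - 2 * f (i + 1) + f (i + 2)) ^ 2 := by
  have h₁₀ := sum_range_shift_mul_eq hf 1 0
  have h₁₁ := sum_range_shift_mul_eq hf 1 1
  have h₂₀ := sum_range_shift_mul_eq hf 2 0
  simp only [sum_range_succ, sum_range_zero] at h₁₀ h₁₁ h₂₀
  have expand : ∀ i, (f i - 2 * f (i + 1) + f (i + 2)) ^ 2 =
      f i * f (i + 0) + 4 * (f (i + 1) * f (i + 1 + 0)) + f (i + 2) * f (i + 2 + 0)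
        - 4 * (f i * f (i + 1)) - 4 * (f (i + 1) * f (i + 1 + 1)) + 2 * (f i * f (i + 2)) :=
    fun i => by ring_nf
  rw [sum_congr rfl fun i _ => expand i]
  simp only [sum_add_distrib, sum_sub_distrib, ← mul_sum, h₁₀, h₁₁, h₂₀]
  simp only [autocorr]
  ring

theorem autocorr_one_lt_autocorr_zero (hf : ∀ i ≥ N, f i = 0) (h₀ : f 0 ≠ 0) :
    autocorr f N 1 < autocorr f N 0 := by
  have := two_mul_autocorr_zero_sub_one hf
  have : 0 < f 0 ^ 2 + ∑ i ∈ range N, (f i - f (i + 1)) ^ 2 :=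
    add_pos_of_pos_of_nonneg (sq_pos_of_ne_zero h₀) (sum_nonneg fun _ _ => sq_nonneg _)
  linarith

theorem autocorr_secondDiff_pos (hf : ∀ i ≥ N, f i = 0) (h₀ : f 0 ≠ 0) :
    0 < 3 * autocorr f N 0 - 4 * autocorr f N 1 + autocorr f N 2 := by
  have := two_mul_autocorr_secondDiff hf
  have : 0 < f 0 ^ 2 + (f 1 - 2 * f 0) ^ 2 +
      ∑ i ∈ range N, (f i - 2 * f (i + 1) + f (i + 2)) ^ 2 := by
    have := sq_pos_of_ne_zero h₀
    positivity
  linarith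

end Autocorrelation

theorem sq_sum_range_eq (f : ℕ → ℝ) (N : ℕ) :
    (∑ i ∈ range N, f i) ^ 2 =
      ∑ i ∈ range N, f i ^ 2 + 2 * ∑ i ∈ range N, f i * ∑ j ∈ range i, f j := by
  induction N with
  | zero => simp
  | succ N ih => rw [sum_range_succ, add_sq, ih, sum_range_succ, sum_range_succ]; ring

noncomputable def binomWeight (α : ℝ) (n i : ℕ) : ℝ := n.choose i * α ^ i * (1 - α) ^ (n - i)

namespace binomWeight

variable (α : ℝ) {n i : ℕ}

theorem eq_zero_of_lt (h : n < i) : binomWeight α n i = 0 := by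
  simp [binomWeight, Nat.choose_eq_zero_of_lt h]

theorem zero_right (n : ℕ) : binomWeight α n 0 = (1 - α) ^ n := by
  simp [binomWeight]

theorem sum_range (n : ℕ) : ∑ i ∈ range (n + 1), binomWeight α n i = 1 := by
  have h := add_pow α (1 - α) n
  rw [add_sub_cancel, one_pow] at h
  rw [h]
  exact sum_congr rfl fun i _ => by rw [binomWeight]; ring

theorem zero_right_ne_zero (hα : α ≠ 1) (n : ℕ) : binomWeight α n 0 ≠ 0 := by
  rw [zero_right]
  exact pow_ne_zero n (sub_ne_zero.mpr hα.symm)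

theorem succ_zero (n : ℕ) : binomWeight α (n + 1) 0 = (1 - α) * binomWeight α n 0 := by
  simp [binomWeight, pow_succ, mul_comm]

theorem succ_succ (n i : ℕ) :
    binomWeight α (n + 1) (i + 1) = (1 - α) * binomWeight α n (i + 1) + α * binomWeight α n i := by
  rcases lt_or_ge n i with h | h
  · simp [eq_zero_of_lt, h, Nat.lt_succ_of_lt h]
  simp only [binomWeight, Nat.choose_succ_succ, Nat.cast_add, Nat.add_sub_add_right]
  rcases h.lt_or_eq with h | rfl
  · rw [show n - i = n - (i + 1) + 1 by omega]
    ring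
  · simp [Nat.choose_succ_self]
    ring

theorem sum_range_succ_succ (n k : ℕ) :
    ∑ j ∈ range (k + 1), binomWeight α (n + 1) j =
      (1 - α) * ∑ j ∈ range (k + 1), binomWeight α n j + α * ∑ j ∈ range k, binomWeight α n j := by
  induction k with
  | zero => simp [succ_zero]
  | succ k ih =>
    rw [sum_range_succ, ih, succ_succ, sum_range_succ _ (k + 1), sum_range_succ _ k]
    ring

theorem mul_eq_choose_mul_choose {i j : ℕ} (hi : i ≤ n) (hj : j ≤ n + 1) :
    binomWeight α n i * binomWeight α (n + 1) j =
      ((n + 1).choose j : ℝ) * n.choose i * α ^ (i + j) * (1 - α) ^ (2 * n + 1 - i - j) := by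
  rw [show 2 * n + 1 - i - j = (n - i) + (n + 1 - j) by omega]
  simp only [binomWeight, pow_add]
  ring

end binomWeight

/-- `binomAutocorr α n m = P(S_n = S'_n + m)` for independent `S_n, S'_n ~ Bin(n, α)`. -/
noncomputable def binomAutocorr (α : ℝ) (n m : ℕ) : ℝ := autocorr (binomWeight α n) (n + 1) m

theorem binomAutocorr_succ_zero (α : ℝ) (n : ℕ) :
    binomAutocorr α (n + 1) 0 =
      ((1 - α) ^ 2 + α ^ 2) * binomAutocorr α n 0 + 2 * α * (1 - α) * binomAutocorr α n 1 := by
  have hf : ∀ i ≥ n + 1, binomWeight α n i = 0 := fun i hi => binomWeight.eq_zero_of_lt α hi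
  have h₁ := sum_range_shift_mul_eq hf 1 0
  simp only [sum_range_one, add_zero, autocorr] at h₁
  have expand : ∀ i, binomWeight α (n + 1) (i + 1) * binomWeight α (n + 1) (i + 1) =
      (1 - α) ^ 2 * (binomWeight α n (i + 1) * binomWeight α n (i + 1)) +
        2 * α * (1 - α) * (binomWeight α n i * binomWeight α n (i + 1)) +
        α ^ 2 * (binomWeight α n i * binomWeight α n i) :=
    fun i => by rw [binomWeight.succ_succ]; ring
  simp only [binomAutocorr, autocorr, add_zero]
  rw [sum_range_succ', sum_congr rfl fun i _ => expand i]
  simp only [sum_add_distrib, ← mul_sum, h₁, binomWeight.succ_zero]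
  ring

theorem binomAutocorr_succ_succ (α : ℝ) (n m : ℕ) :
    binomAutocorr α (n + 1) (m + 1) =
      ((1 - α) ^ 2 + α ^ 2) * binomAutocorr α n (m + 1) +
        α * (1 - α) * (binomAutocorr α n m + binomAutocorr α n (m + 2)) := by
  have hf : ∀ i ≥ n + 1, binomWeight α n i = 0 := fun i hi => binomWeight.eq_zero_of_lt α hi
  have h₁ := sum_range_shift_mul_eq hf 1 m
  have h₂ := sum_range_shift_mul_eq hf 1 (m + 1)
  rw [sum_range_one] at h₁ h₂
  have expand : ∀ i, binomWeight α (n + 1) (i + 1) * binomWeight α (n + 1) (i + 1 + (m + 1)) =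
      (1 - α) ^ 2 * (binomWeight α n (i + 1) * binomWeight α n (i + 1 + (m + 1))) +
        α * (1 - α) * (binomWeight α n (i + 1) * binomWeight α n (i + 1 + m)) +
        α * (1 - α) * (binomWeight α n i * binomWeight α n (i + (m + 2))) +
        α ^ 2 * (binomWeight α n i * binomWeight α n (i + (m + 1))) := fun i => by
    rw [show i + 1 + (m + 1) = i + 1 + m + 1 by omega, binomWeight.succ_succ,
      binomWeight.succ_succ, show i + (m + 2) = i + 1 + m + 1 by omega,
      show i + (m + 1) = i + 1 + m by omega]
    ring
  rw [binomAutocorr, autocorr, sum_range_succ', sum_congr rfl fun i _ => expand i]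
  simp only [sum_add_distrib, ← mul_sum, h₁, h₂, zero_add, binomWeight.succ_zero,
    binomWeight.succ_succ]
  simp only [binomAutocorr, autocorr]
  ring

theorem competeProb_one_one_eq (α : ℝ) (n : ℕ) :
    competeProb α 1 1 n = 1 / 2 - (1 / 2 - α) * binomAutocorr α n 0 := by
  set w := binomWeight α
  set F : ℕ → ℝ := fun i => ∑ j ∈ range i, w n j
  have tail : ∀ i ∈ range (n + 1), ∑ j ∈ Icc (i + 1) (n + 1),
      ((n + 1).choose j : ℝ) * n.choose i * α ^ (i + j) * (1 - α) ^ (2 * n + 1 - i - j) =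
        w n i * (1 - F i - (1 - α) * w n i) := by
    intro i hi
    have hi : i ≤ n := Nat.lt_succ_iff.mp (mem_range.mp hi)
    have split := sum_range_add_sum_Ico (w (n + 1)) (show i + 1 ≤ n + 1 + 1 by omega)
    rw [binomWeight.sum_range, Ico_add_one_right_eq_Icc,
      binomWeight.sum_range_succ_succ, sum_range_succ] at split
    rw [← sum_congr rfl fun j hj => binomWeight.mul_eq_choose_mul_choose α hi (mem_Icc.mp hj).2,
      ← mul_sum]
    linear_combination w n i * split
  have square := sq_sum_range_eq (w n) (n + 1)
  rw [binomWeight.sum_range] at square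
  rw [competeProb, sum_congr rfl tail]
  simp only [binomAutocorr, autocorr, add_zero, mul_sub, mul_one, sum_sub_distrib,
    ← mul_sum, mul_left_comm _ (1 - α), ← sq]
  linear_combination (1 / 2 : ℝ) * square + binomWeight.sum_range α n

theorem binomAutocorr_zero_succ_lt {α : ℝ} (hα₀ : 0 < α) (hα₁ : α < 1) (n : ℕ) :
    binomAutocorr α (n + 1) 0 < binomAutocorr α n 0 := by
  have hβ : 0 < α * (1 - α) := mul_pos hα₀ (sub_pos.mpr hα₁)
  have hgap : binomAutocorr α n 1 < binomAutocorr α n 0 :=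
    autocorr_one_lt_autocorr_zero (fun i hi => binomWeight.eq_zero_of_lt α hi)
      (binomWeight.zero_right_ne_zero α hα₁.ne n)
  rw [binomAutocorr_succ_zero]
  linarith [mul_pos hβ (sub_pos.mpr hgap)]

theorem binomAutocorr_zero_succ_sub_lt {α : ℝ} (hα₀ : 0 < α) (hα₁ : α < 1) (n : ℕ) :
    binomAutocorr α (n + 1) 0 - binomAutocorr α n 0 <
      binomAutocorr α (n + 2) 0 - binomAutocorr α (n + 1) 0 := by
  have hβ : 0 < α * (1 - α) := mul_pos hα₀ (sub_pos.mpr hα₁)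
  have hpos : 0 < 3 * binomAutocorr α n 0 - 4 * binomAutocorr α n 1 + binomAutocorr α n 2 :=
    autocorr_secondDiff_pos (fun i hi => binomWeight.eq_zero_of_lt α hi)
      (binomWeight.zero_right_ne_zero α hα₁.ne n)
  have secondDiff :
      binomAutocorr α (n + 2) 0 - 2 * binomAutocorr α (n + 1) 0 + binomAutocorr α n 0 =
        2 * (α * (1 - α)) ^ 2 *
          (3 * binomAutocorr α n 0 - 4 * binomAutocorr α n 1 + binomAutocorr α n 2) := by
    rw [binomAutocorr_succ_zero α (n + 1), binomAutocorr_succ_succ α n 0, binomAutocorr_succ_zero]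
    ring
  linarith [mul_pos (pow_pos hβ 2) hpos]

theorem competeProb_increasing_concave_of_lt_half (α : ℝ) (hα0 : 0 < α) (hα : α < 1 / 2) :
    (∀ n : ℕ, competeProb α 1 1 n < competeProb α 1 1 (n + 1)) ∧
    (∀ n : ℕ, competeProb α 1 1 (n + 2) - competeProb α 1 1 (n + 1) <
      competeProb α 1 1 (n + 1) - competeProb α 1 1 n) := by
  have hα1 : α < 1 := by linarith
  have hc : 0 < 1 / 2 - α := by linarith
  simp only [competeProb_one_one_eq]
  refine ⟨fun n => ?_, fun n => ?_⟩
  · linarith [mul_lt_mul_of_pos_left (binomAutocorr_zero_succ_lt hα0 hα1 n) hc]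
  · linarith [mul_lt_mul_of_pos_left (binomAutocorr_zero_succ_sub_lt hα0 hα1 n) hc]
end

section
/- If 1/2 < α < 1, then the sequence p_n := p_n^{1,1} = P(S_{n+1} > S'_n), n = 0, 1, 2, …, is strictly decreasing and strictly convex, i.e. p_{n+1} < p_n for all n and p_{n+2} − p_{n+1} > p_{n+1} − p_n for all n. -/
open Finset Filter Topology

/-!
With `u = αX + (1 - α)` and `v = (1 - α)X + α`, the polynomial `P_n = u^(n+1) v^n` is the
generating polynomial of `S_{n+1} + n - S'_n`, so `p_n` is the sum of its coefficients of index
`> n`. Since `u v = X + α(1 - α)(1 - X)^2`, the first difference `p_{n+1} - p_n` is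
`-α(1 - α)` times the central coefficient of `(1 - X) P_n`, and the second difference is
`-(α(1 - α))^2` times the central coefficient of `(1 - X)^3 P_n`. Reflecting `f ↦ X^N f(1/X)`
swaps `u` and `v` and fixes central coefficients, and `u - v = (2α - 1)(X - 1)`; so twice the
central coefficient of `(1 - X)^(2k+1) P_n` is `(-1)^k (2α - 1)` times the central coefficient of
`q · reflect q` for `q = (1 - X)^(k+1) u^n`, which is a sum of squares.
-/

open Polynomial

namespace Polynomial

variable {R : Type*} [CommRing R]

theorem coeff_mul_reflect_self (q : R[X]) (N : ℕ) :
    (q * reflect N q).coeff N = ∑ i ∈ range (N + 1), q.coeff i ^ 2 := by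
  rw [coeff_mul, Nat.sum_antidiagonal_eq_sum_range_succ_mk]
  refine sum_congr rfl fun i hi => ?_
  rw [coeff_reflect, revAt_le (Nat.sub_le N i),
    Nat.sub_sub_self (Nat.lt_succ_iff.mp (mem_range.mp hi)), sq]

theorem natDegree_C_mul_X_add_C_pow_le (a b : R) (m : ℕ) :
    ((C a * X + C b) ^ m).natDegree ≤ m :=
  (natDegree_pow_le_of_le m natDegree_linear_le).trans_eq (mul_one m)

theorem reflect_C_mul_X_add_C (a b : R) : reflect 1 (C a * X + C b) = C b * X + C a := by
  rw [reflect_add, ← pow_one X, reflect_C_mul_X_pow, reflect_C, revAt_le le_rfl]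
  simp [add_comm]

theorem reflect_C_mul_X_add_C_pow (a b : R) (m : ℕ) :
    reflect m ((C a * X + C b) ^ m) = (C b * X + C a) ^ m := by
  induction m with
  | zero => simp
  | succ m ih =>
    rw [pow_succ, reflect_mul _ _ (natDegree_C_mul_X_add_C_pow_le a b m) natDegree_linear_le, ih,
      reflect_C_mul_X_add_C, pow_succ]

theorem one_sub_X_eq_C_mul_X_add_C : (1 - X : R[X]) = C (-1) * X + C 1 := by
  simp only [map_neg, map_one]
  ring

theorem natDegree_one_sub_X_pow_le (m : ℕ) : ((1 - X : R[X]) ^ m).natDegree ≤ m := by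
  rw [one_sub_X_eq_C_mul_X_add_C]
  exact natDegree_C_mul_X_add_C_pow_le _ _ m

theorem reflect_one_sub_X_pow (m : ℕ) : reflect m ((1 - X : R[X]) ^ m) = (X - 1) ^ m := by
  rw [one_sub_X_eq_C_mul_X_add_C, reflect_C_mul_X_add_C_pow]
  simp [sub_eq_add_neg]

theorem two_mul_coeff_one_sub_X_pow_mul_eq_sum_sq (a b : R) (n k : ℕ) :
    2 * ((1 - X) ^ (2 * k + 1) * ((C a * X + C b) ^ (n + 1) * (C b * X + C a) ^ n)).coeff
        (n + k + 1) =
      (-1) ^ k * (a - b) *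
        ∑ i ∈ range (n + k + 2), (((1 - X) ^ (k + 1) * (C a * X + C b) ^ n).coeff i) ^ 2 := by
  set N := n + k + 1
  set u := C a * X + C b
  set v := C b * X + C a
  set f := (1 - X) ^ (2 * k + 1) * (u ^ (n + 1) * v ^ n)
  set q := (1 - X) ^ (k + 1) * u ^ n
  have hf : reflect (2 * N) f = (X - 1) ^ (2 * k + 1) * (v ^ (n + 1) * u ^ n) := by
    rw [show 2 * N = (2 * k + 1) + ((n + 1) + n) by omega,
      reflect_mul _ _ (natDegree_one_sub_X_pow_le _)
        (natDegree_mul_le_of_le (natDegree_C_mul_X_add_C_pow_le a b _)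
          (natDegree_C_mul_X_add_C_pow_le b a _)),
      reflect_mul _ _ (natDegree_C_mul_X_add_C_pow_le a b _)
        (natDegree_C_mul_X_add_C_pow_le b a _),
      reflect_one_sub_X_pow, reflect_C_mul_X_add_C_pow, reflect_C_mul_X_add_C_pow]
  have hq : reflect N q = (X - 1) ^ (k + 1) * v ^ n := by
    rw [show N = (k + 1) + n by omega,
      reflect_mul _ _ (natDegree_one_sub_X_pow_le _) (natDegree_C_mul_X_add_C_pow_le a b _),
      reflect_one_sub_X_pow, reflect_C_mul_X_add_C_pow]
  have hcentral : (reflect (2 * N) f).coeff N = f.coeff N := by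
    rw [coeff_reflect, revAt_le (by omega), show 2 * N - N = N by omega]
  have hsum : f + reflect (2 * N) f = C ((-1) ^ k * (a - b)) * (q * reflect N q) := by
    have hodd : (X - 1 : R[X]) ^ (2 * k + 1) = -(1 - X) ^ (2 * k + 1) := by
      rw [← neg_sub, Odd.neg_pow (odd_two_mul_add_one k)]
    have hsucc : (X - 1 : R[X]) ^ (k + 1) = -(-1) ^ k * (1 - X) ^ (k + 1) := by
      rw [← neg_sub, neg_pow, pow_succ]
      ring
    have hsq : ((-1 : R[X]) ^ k) ^ 2 = 1 := by rw [← pow_mul, pow_mul', neg_one_sq, one_pow]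
    rw [hf, hq, hodd, hsucc]
    simp only [f, q, u, v, map_mul, map_pow, map_neg, map_one, map_sub]
    -- `u - v = (a - b)(X - 1)`
    linear_combination (C a - C b) * (1 - X) ^ (2 * k + 2) * (C a * X + C b) ^ n *
      (C b * X + C a) ^ n * hsq
  calc 2 * f.coeff N = (f + reflect (2 * N) f).coeff N := by rw [coeff_add, hcentral, two_mul]
    _ = _ := by rw [hsum, coeff_C_mul, coeff_mul_reflect_self]

theorem coeff_zero_one_sub_X_pow_mul_C_mul_X_add_C_pow (a b : R) (j n : ℕ) :
    ((1 - X) ^ j * (C a * X + C b) ^ n).coeff 0 = b ^ n := by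
  simp [coeff_zero_eq_eval_zero]

theorem sum_range_coeff_sq_pos {S : Type*} [CommRing S] [LinearOrder S] [IsStrictOrderedRing S]
    {q : S[X]} (hq : q.coeff 0 ≠ 0) {N : ℕ} (hN : 0 < N) :
    0 < ∑ i ∈ range N, q.coeff i ^ 2 :=
  sum_pos' (fun i _ => sq_nonneg _) ⟨0, mem_range.mpr hN, by positivity⟩

variable (R) in
noncomputable def upperTail (m : ℕ) : R[X] →ₗ[R] R :=
  leval 1 - ∑ i ∈ range m, lcoeff R i

theorem upperTail_apply (m : ℕ) (p : R[X]) :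
    upperTail R m p = p.eval 1 - ∑ i ∈ range m, p.coeff i := by
  simp [upperTail]

theorem upperTail_C_mul_X_pow (m k : ℕ) (c : R) :
    upperTail R m (C c * X ^ k) = if m ≤ k then c else 0 := by
  rw [upperTail_apply]
  simp only [coeff_C_mul_X_pow, eval_mul, eval_C, eval_pow, eval_X, one_pow, mul_one,
    sum_ite_eq', mem_range]
  split_ifs <;> first | omega | simp

theorem upperTail_succ_X_mul (m : ℕ) (p : R[X]) :
    upperTail R (m + 1) (X * p) = upperTail R m p := by
  simp only [upperTail_apply, sum_range_succ', coeff_X_mul, coeff_X_mul_zero, eval_mul, eval_X,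
    one_mul, add_zero]

theorem sum_range_succ_coeff_one_sub_X_mul (q : R[X]) (m : ℕ) :
    ∑ i ∈ range (m + 1), ((1 - X) * q).coeff i = q.coeff m := by
  induction m with
  | zero => simp [coeff_zero_eq_eval_zero]
  | succ m ih =>
    rw [sum_range_succ, ih, sub_mul, one_mul, coeff_sub, coeff_X_mul]
    ring

theorem upperTail_add_two_one_sub_X_sq_mul (m : ℕ) (q : R[X]) :
    upperTail R (m + 2) ((1 - X) ^ 2 * q) = -((1 - X) * q).coeff (m + 1) := by
  rw [upperTail_apply, sq, mul_assoc, sum_range_succ_coeff_one_sub_X_mul]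
  simp

end Polynomial

noncomputable def competePoly (α : ℝ) (n : ℕ) : ℝ[X] :=
  (C α * X + C (1 - α)) ^ (n + 1) * (C (1 - α) * X + C α) ^ n

theorem competePoly_succ (α : ℝ) (n : ℕ) :
    competePoly α (n + 1) =
      X * competePoly α n + C (α * (1 - α)) * ((1 - X) ^ 2 * competePoly α n) := by
  simp only [competePoly, map_mul, map_sub, map_one]
  ring

theorem competeProb_eq_upperTail (α : ℝ) (n : ℕ) :
    competeProb α 1 1 n = upperTail ℝ (n + 1) (competePoly α n) := by
  rw [competePoly, mul_comm, add_comm (C (1 - α) * X), add_pow, add_pow, sum_mul_sum, map_sum,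
    competeProb]
  refine sum_congr rfl fun i hi => ?_
  have hi' : i ≤ n := Nat.lt_succ_iff.mp (mem_range.mp hi)
  have hIcc : Icc (i + 1) (n + 1) = (range (n + 2)).filter (i + 1 ≤ ·) := by
    ext j
    simp only [mem_Icc, mem_filter, mem_range]
    omega
  rw [map_sum, hIcc, sum_filter]
  refine sum_congr rfl fun j hj => ?_
  have hj' : j ≤ n + 1 := Nat.lt_succ_iff.mp (mem_range.mp hj)
  have hmonomial : C α ^ i * (C (1 - α) * X) ^ (n - i) * (n.choose i : ℝ[X]) *
        ((C α * X) ^ j * C (1 - α) ^ (n + 1 - j) * ((n + 1).choose j : ℝ[X])) =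
      C (((n + 1).choose j) * (n.choose i) * α ^ (i + j) * (1 - α) ^ (2 * n + 1 - i - j)) *
        X ^ (n - i + j) := by
    rw [show 2 * n + 1 - i - j = (n - i) + (n + 1 - j) by omega]
    simp only [map_mul, map_pow, map_natCast]
    ring
  rw [hmonomial, upperTail_C_mul_X_pow]
  exact if_congr (by omega) rfl rfl

theorem competeProb_succ_sub (α : ℝ) (n : ℕ) :
    competeProb α 1 1 (n + 1) - competeProb α 1 1 n =
      -(α * (1 - α)) * ((1 - X) * competePoly α n).coeff (n + 1) := by
  rw [competeProb_eq_upperTail, competeProb_eq_upperTail, competePoly_succ, map_add,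
    upperTail_succ_X_mul, C_mul', map_smul, upperTail_add_two_one_sub_X_sq_mul, smul_eq_mul]
  ring

theorem coeff_one_sub_X_mul_competePoly_succ_sub (α : ℝ) (n : ℕ) :
    ((1 - X) * competePoly α (n + 1)).coeff (n + 1 + 1) -
        ((1 - X) * competePoly α n).coeff (n + 1) =
      α * (1 - α) * ((1 - X) ^ 3 * competePoly α n).coeff (n + 2) := by
  rw [competePoly_succ, show ∀ p q : ℝ[X], (1 - X) * (X * p + q * ((1 - X) ^ 2 * p)) =
      X * ((1 - X) * p) + q * ((1 - X) ^ 3 * p) by intros; ring, coeff_add, coeff_X_mul,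
    coeff_C_mul]
  ring

theorem neg_one_pow_mul_coeff_one_sub_X_pow_mul_competePoly_pos {α : ℝ} (hα0 : 1 / 2 < α)
    (hα : α < 1) (n k : ℕ) :
    0 < (-1) ^ k * ((1 - X) ^ (2 * k + 1) * competePoly α n).coeff (n + k + 1) := by
  have h := two_mul_coeff_one_sub_X_pow_mul_eq_sum_sq α (1 - α) n k
  set S :=
    ∑ i ∈ range (n + k + 2), (((1 - X) ^ (k + 1) * (C α * X + C (1 - α)) ^ n).coeff i) ^ 2
  have hS : 0 < S := sum_range_coeff_sq_pos
    ((coeff_zero_one_sub_X_pow_mul_C_mul_X_add_C_pow α (1 - α) (k + 1) n).trans_ne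
      (pow_ne_zero n (by linarith))) (by omega)
  have hpos : 0 < (2 * α - 1) * S := mul_pos (by linarith) hS
  have hsq : ((-1 : ℝ) ^ k) ^ 2 = 1 := by rw [← pow_mul, pow_mul', neg_one_sq, one_pow]
  rw [competePoly]
  linear_combination (hpos - (-1) ^ k * h - (2 * α - 1) * S * hsq) / 2

theorem competeProb_decreasing_convex_of_half_lt (α : ℝ) (hα0 : 1 / 2 < α) (hα : α < 1) :
    (∀ n : ℕ, competeProb α 1 1 (n + 1) < competeProb α 1 1 n) ∧
    (∀ n : ℕ, competeProb α 1 1 (n + 1) - competeProb α 1 1 n <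
      competeProb α 1 1 (n + 2) - competeProb α 1 1 (n + 1)) := by
  have hvar : 0 < α * (1 - α) := mul_pos (by linarith) (by linarith)
  have hfirst := fun n => neg_one_pow_mul_coeff_one_sub_X_pow_mul_competePoly_pos hα0 hα n 0
  have hsecond := fun n => neg_one_pow_mul_coeff_one_sub_X_pow_mul_competePoly_pos hα0 hα n 1
  simp only [pow_zero, one_mul, mul_zero, zero_add, add_zero, pow_one, neg_one_mul,
    neg_pos] at hfirst hsecond
  refine ⟨fun n => ?_, fun n => ?_⟩
  · rw [← sub_neg, competeProb_succ_sub]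
    exact mul_neg_of_neg_of_pos (neg_neg_of_pos hvar) (hfirst n)
  · rw [← sub_pos, competeProb_succ_sub, competeProb_succ_sub, ← mul_sub,
      coeff_one_sub_X_mul_competePoly_succ_sub]
    nlinarith [mul_pos hvar hvar, hsecond n]
end

section
/- If r and d are positive integers with r ≥ 2d − 1, and α satisfies d/(r+1) < α < 1, then the sequence p_n^{r,d}, n = 0, 1, 2, …, is strictly decreasing. -/
open Finset Filter Topology

/-!
Write `D_n = S_{n+r} - S'_n`, so that `p_n = P(D_n ≥ d)`. Adding one trial to each side gives
`D_{n+1} = D_n + (Y - Y')` with `Y, Y'` independent Bernoulli(`α`), and `Y - Y'` takes the values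
`-1, 0, 1` with probabilities `c, 1 - 2c, c`, where `c = α(1 - α)`. Hence
`p_{n+1} = p_n - c (P(D_n = d) - P(D_n = d - 1))`, and it suffices that `P(D_n = d - 1) < P(D_n = d)`.

This follows from the stronger property `P(D_n = 2d - 1 - k) ≤ P(D_n = k)` for all `k ≥ d`,
strict for `k = d`, which convolution with the symmetric law of `Y - Y'` preserves because
`1 - 2c > c`. For `D_0 = S_r` it follows by comparing ratios of consecutive binomial weights; this is
where `α > d / (r + 1)` and `r ≥ 2d - 1` enter.

Laws of integer-valued variables are encoded as Laurent polynomials `∑ P(D = k) T^k`, so that adding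
an independent variable is multiplication.
-/

open LaurentPolynomial

namespace LaurentPolynomial

variable {R : Type*}

section Semiring
variable [Semiring R]

/-- The sum of the coefficients of `f` in degrees `≥ d`. -/
noncomputable def tailSum (d : ℤ) : R[T;T⁻¹] →+ R :=
  (Finsupp.liftAddHom fun k => if d ≤ k then AddMonoidHom.id R else 0).comp
    (AddMonoidAlgebra.coeffAddEquiv (R := R) (M := ℤ)).toAddMonoidHom

@[simp]
lemma tailSum_C_mul_T (d n : ℤ) (a : R) : tailSum d (C a * T n) = if d ≤ n then a else 0 := by
  rw [← single_eq_C_mul_T, tailSum, AddMonoidHom.comp_apply, AddEquiv.coe_toAddMonoidHom,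
    AddMonoidAlgebra.coeffAddEquiv_apply, AddMonoidAlgebra.coeff_single,
    Finsupp.liftAddHom_apply_single]
  split_ifs <;> rfl

lemma coeff_C_mul_T (a : R) (n k : ℤ) : (C a * T n).coeff k = if n = k then a else 0 := by
  rw [← single_eq_C_mul_T, AddMonoidAlgebra.coeff_single, Finsupp.single_apply]

lemma coeff_mul_T (f : R[T;T⁻¹]) (s k : ℤ) : (f * T s).coeff k = f.coeff (k - s) := by
  rw [T, AddMonoidAlgebra.coeff_mul_single_apply, mul_one, sub_eq_add_neg]

lemma coeff_C_mul (a : R) (f : R[T;T⁻¹]) (k : ℤ) : (C a * f).coeff k = a * f.coeff k :=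
  AddMonoidAlgebra.coeff_single_zero_mul f a k

lemma tailSum_mul_T (d s : ℤ) (f : R[T;T⁻¹]) : tailSum d (f * T s) = tailSum (d - s) f := by
  induction f using LaurentPolynomial.induction_on' with
  | add p q hp hq => rw [add_mul, map_add, map_add, hp, hq]
  | C_mul_T n a =>
    rw [mul_assoc, ← T_add, tailSum_C_mul_T, tailSum_C_mul_T]
    simp only [sub_le_iff_le_add]

lemma tailSum_C_mul (d : ℤ) (a : R) (f : R[T;T⁻¹]) : tailSum d (C a * f) = a * tailSum d f := by
  induction f using LaurentPolynomial.induction_on' with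
  | add p q hp hq => rw [mul_add, map_add, map_add, hp, hq, mul_add]
  | C_mul_T n b => rw [← mul_assoc, ← map_mul, tailSum_C_mul_T, tailSum_C_mul_T, mul_ite, mul_zero]

lemma tailSum_sub_one (d : ℤ) (f : R[T;T⁻¹]) :
    tailSum (d - 1) f = f.coeff (d - 1) + tailSum d f := by
  induction f using LaurentPolynomial.induction_on' with
  | add p q hp hq =>
    rw [map_add, map_add, hp, hq, AddMonoidAlgebra.coeff_add, Finsupp.add_apply,
      add_add_add_comm]
  | C_mul_T n a =>
    rw [tailSum_C_mul_T, tailSum_C_mul_T, coeff_C_mul_T]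
    rcases eq_or_ne n (d - 1) with rfl | h
    · simp
    · rw [if_neg h, zero_add]
      exact if_congr (by omega) rfl rfl

end Semiring

section CommSemiring
variable [CommSemiring R]

lemma C_mul_T_add_C_pow (a b : R) (s : ℤ) (N : ℕ) :
    (C a * T s + C b) ^ N =
      ∑ j ∈ range (N + 1), C (a ^ j * b ^ (N - j) * N.choose j) * T (j * s) := by
  rw [add_pow]
  refine sum_congr rfl fun j _ => ?_
  rw [mul_pow, T_pow, map_mul, map_mul, map_pow, map_pow, map_natCast]
  ring

noncomputable def symmKernel (c b : R) : R[T;T⁻¹] := C c * T 1 + C b + C c * T (-1)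

lemma mul_symmKernel (f : R[T;T⁻¹]) (c b : R) :
    f * symmKernel c b = C c * (f * T 1) + C b * f + C c * (f * T (-1)) := by
  rw [symmKernel]; ring

lemma coeff_mul_symmKernel (f : R[T;T⁻¹]) (c b : R) (k : ℤ) :
    (f * symmKernel c b).coeff k =
      c * f.coeff (k - 1) + b * f.coeff k + c * f.coeff (k + 1) := by
  rw [mul_symmKernel, AddMonoidAlgebra.coeff_add, AddMonoidAlgebra.coeff_add, Finsupp.add_apply,
    Finsupp.add_apply, coeff_C_mul, coeff_C_mul, coeff_C_mul, coeff_mul_T, coeff_mul_T,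
    sub_neg_eq_add]

end CommSemiring

section CommRing
variable [CommRing R]

lemma tailSum_mul_symmKernel (d : ℤ) (c b : R) (f : R[T;T⁻¹]) :
    tailSum d (f * symmKernel c b) =
      (2 * c + b) * tailSum d f - c * (f.coeff d - f.coeff (d - 1)) := by
  have h := tailSum_sub_one (d + 1) f
  rw [add_sub_cancel_right] at h
  rw [mul_symmKernel, map_add, map_add, tailSum_C_mul, tailSum_C_mul, tailSum_C_mul,
    tailSum_mul_T, tailSum_mul_T, tailSum_sub_one, sub_neg_eq_add, h]
  ring

lemma coeff_C_mul_T_one_add_C_pow (a b : R) (N m : ℕ) :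
    ((C a * T 1 + C b) ^ N).coeff m = a ^ m * b ^ (N - m) * N.choose m := by
  rw [C_mul_T_add_C_pow, AddMonoidAlgebra.coeff_sum, Finset.sum_apply']
  simp only [mul_one, coeff_C_mul_T, Nat.cast_inj, sum_ite_eq', mem_range]
  split_ifs with h
  · rfl
  · rw [Nat.choose_eq_zero_of_lt (by omega), Nat.cast_zero, mul_zero]

lemma coeff_C_mul_T_one_add_C_pow_of_neg (a b : R) (N : ℕ) {k : ℤ} (hk : k < 0) :
    ((C a * T 1 + C b) ^ N).coeff k = 0 := by
  rw [C_mul_T_add_C_pow, AddMonoidAlgebra.coeff_sum, Finset.sum_apply']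
  refine sum_eq_zero fun j _ => ?_
  rw [coeff_C_mul_T, if_neg (by omega)]

lemma succ_mul_coeff_C_mul_T_one_add_C_pow (a b : R) (N m : ℕ) :
    (m + 1) * b * ((C a * T 1 + C b) ^ N).coeff (m + 1) =
      (N - m) * a * ((C a * T 1 + C b) ^ N).coeff m := by
  have hsucc := coeff_C_mul_T_one_add_C_pow a b N (m + 1)
  rw [Nat.cast_succ] at hsucc
  rw [hsucc, coeff_C_mul_T_one_add_C_pow]
  rcases lt_or_ge m N with h | h
  · have hchoose : ((N.choose (m + 1) * (m + 1) : ℕ) : R) = (N.choose m * (N - m) : ℕ) :=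
      congrArg _ (Nat.choose_succ_right_eq N m)
    push_cast [Nat.cast_sub h.le] at hchoose
    rw [show N - m = N - (m + 1) + 1 by omega, pow_succ]
    linear_combination a ^ (m + 1) * b ^ (N - (m + 1)) * b * hchoose
  · obtain rfl | h := h.eq_or_lt
    · rw [Nat.choose_succ_self, Nat.cast_zero, sub_self]; ring
    · rw [Nat.choose_eq_zero_of_lt h, Nat.choose_eq_zero_of_lt (by omega)]; simp

end CommRing

section Order
variable [CommRing R] [LinearOrder R] [IsStrictOrderedRing R]

def DominatesReflection (f : R[T;T⁻¹]) (d : ℤ) : Prop :=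
  f.coeff (d - 1) < f.coeff d ∧ ∀ k, d ≤ k → f.coeff (2 * d - 1 - k) ≤ f.coeff k

lemma DominatesReflection.mul_symmKernel {f : R[T;T⁻¹]} {d : ℤ} (hf : DominatesReflection f d)
    {c b : R} (hc : 0 ≤ c) (hcb : c < b) : DominatesReflection (f * symmKernel c b) d := by
  obtain ⟨hlt, hle⟩ := hf
  have hrefl (k : ℤ) (hk : d ≤ k) (x : R) (hx : 0 ≤ x) :
      x * f.coeff (2 * d - 1 - k) ≤ x * f.coeff k :=
    mul_le_mul_of_nonneg_left (hle k hk) hx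
  have hstrict : (f * symmKernel c b).coeff (d - 1) < (f * symmKernel c b).coeff d := by
    have h := hrefl (d + 1) (by omega) c hc
    rw [coeff_mul_symmKernel, coeff_mul_symmKernel, sub_add_cancel]
    rw [show 2 * d - 1 - (d + 1) = d - 1 - 1 by ring] at h
    nlinarith [mul_pos (sub_pos.2 hcb) (sub_pos.2 hlt)]
  refine ⟨hstrict, fun k hk => ?_⟩
  obtain rfl | hk := hk.eq_or_lt
  · rw [show 2 * d - 1 - d = d - 1 by ring]
    exact hstrict.le
  · have h₁ := hrefl (k + 1) (by omega) c hc
    have h₂ := hrefl k hk.le b (hc.trans hcb.le)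
    have h₃ := hrefl (k - 1) (by omega) c hc
    rw [coeff_mul_symmKernel, coeff_mul_symmKernel]
    rw [show 2 * d - 1 - (k + 1) = 2 * d - 1 - k - 1 by ring] at h₁
    rw [show 2 * d - 1 - (k - 1) = 2 * d - 1 - k + 1 by ring] at h₃
    linarith

end Order

end LaurentPolynomial

/-- In the application `X, Y` and `Z, W` are the binomial weights at `d - s - 1, d - s` and at
`d + s - 1, d + s`, with `R = r + 1 - d`. -/
lemma le_of_mul_eq_of_mul_eq {α β d R s X Y Z W : ℝ} (hα : 0 < α) (hβ : 0 < β) (hs : 0 < s)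
    (hsd : s ≤ d) (hdR : d ≤ R) (hαβ : d * β ≤ R * α) (hY : 0 ≤ Y) (hYZ : Y ≤ Z)
    (hX : (d - s) * β * Y = (R + s) * α * X) (hW : (d + s) * β * W = (R - s) * α * Z) :
    X ≤ W := by
  have hsd2 : s ^ 2 ≤ d ^ 2 := pow_le_pow_left₀ hs.le hsd 2
  have hdR2 : d ^ 2 ≤ R ^ 2 := pow_le_pow_left₀ (hs.le.trans hsd) hdR 2
  have hαβ2 : (d * β) ^ 2 ≤ (R * α) ^ 2 :=
    pow_le_pow_left₀ (mul_nonneg (hs.le.trans hsd) hβ.le) hαβ 2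
  have hscalar : (d ^ 2 - s ^ 2) * β ^ 2 ≤ (R ^ 2 - s ^ 2) * α ^ 2 := by
    rcases le_total β α with h | h
    · nlinarith [pow_le_pow_left₀ hβ.le h 2]
    · nlinarith [pow_le_pow_left₀ hα.le h 2]
  have key : (R + s) * (d + s) * α * β * (W - X) =
      (R ^ 2 - s ^ 2) * α ^ 2 * Z - (d ^ 2 - s ^ 2) * β ^ 2 * Y := by
    linear_combination (R + s) * α * hW + (d + s) * β * hX
  have hpos : 0 < (R + s) * (d + s) * α * β := by
    have : 0 < R + s := by linarith
    have : 0 < d + s := by linarith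
    positivity
  nlinarith [mul_le_mul_of_nonneg_right hscalar (hY.trans hYZ),
    mul_le_mul_of_nonneg_left hYZ (by nlinarith : 0 ≤ (d ^ 2 - s ^ 2) * β ^ 2)]

lemma dominatesReflection_C_mul_T_one_add_C_pow {α : ℝ} {r d : ℕ} (hd : 1 ≤ d)
    (hdr : 2 * d ≤ r + 1) (hα0 : 0 < α) (hα1 : α < 1) (hα : d * (1 - α) < (r + 1 - d) * α) :
    DominatesReflection ((C α * T 1 + C (1 - α)) ^ r) d := by
  set P := (C α * T 1 + C (1 - α)) ^ r
  have hβ : 0 < 1 - α := sub_pos.2 hα1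
  have hneg (k : ℤ) (hk : k < 0) : P.coeff k = 0 := coeff_C_mul_T_one_add_C_pow_of_neg _ _ _ hk
  have hnonneg (k : ℤ) : 0 ≤ P.coeff k := by
    rcases lt_or_ge k 0 with hk | hk
    · rw [hneg k hk]
    · lift k to ℕ using hk
      rw [coeff_C_mul_T_one_add_C_pow]
      positivity
  have hratio (k : ℤ) (hk : 1 ≤ k) :
      (k : ℝ) * (1 - α) * P.coeff k = (r + 1 - k) * α * P.coeff (k - 1) := by
    obtain ⟨m, rfl⟩ : ∃ m : ℕ, k = m + 1 := ⟨(k - 1).toNat, by omega⟩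
    push_cast
    rw [add_sub_cancel_right]
    linear_combination succ_mul_coeff_C_mul_T_one_add_C_pow α (1 - α) r m
  have hpos : 0 < P.coeff (d - 1) := by
    rw [show (d : ℤ) - 1 = ((d - 1 : ℕ) : ℤ) by omega, coeff_C_mul_T_one_add_C_pow]
    have := Nat.choose_pos (show d - 1 ≤ r by omega)
    positivity
  have hstrict : P.coeff (d - 1) < P.coeff d := by
    have h := hratio d (by omega)
    push_cast at h
    have hdβ : 0 < (d : ℝ) * (1 - α) := mul_pos (by exact_mod_cast hd) hβ
    nlinarith [mul_lt_mul_of_pos_right hα hpos]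
  refine ⟨hstrict, fun k hk => ?_⟩
  induction k, hk using Int.leInduction with
  | base => rw [show 2 * (d : ℤ) - 1 - d = d - 1 by ring]; exact hstrict.le
  | succ k hk ih =>
    rcases lt_or_ge (2 * d - 1 - (k + 1)) 0 with h | h
    · rw [hneg _ h]; exact hnonneg _
    have hX := hratio (2 * d - 1 - k) (by omega)
    have hW := hratio (k + 1) (by omega)
    rw [show 2 * (d : ℤ) - 1 - k - 1 = 2 * d - 1 - (k + 1) by ring] at hX
    rw [add_sub_cancel_right] at hW
    push_cast at hX hW
    have hkd : (d : ℝ) ≤ k := by exact_mod_cast hk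
    have hkd' : (k : ℝ) + 2 ≤ 2 * d := by exact_mod_cast (show k + 2 ≤ 2 * d by omega)
    have hdr' : (2 * d : ℝ) ≤ r + 1 := by exact_mod_cast hdr
    exact le_of_mul_eq_of_mul_eq (d := d) (R := r + 1 - d) (s := k + 1 - d) hα0 hβ
      (by linarith) (by linarith) (by linarith) hα.le (hnonneg _) ih
      (by linear_combination hX) (by linear_combination hW)

/-- The law of `S_{n+r} - S'_n`: its coefficient of `T ^ k` is `P(S_{n+r} - S'_n = k)`. -/
noncomputable def competeGenFun (α : ℝ) (r n : ℕ) : ℝ[T;T⁻¹] :=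
  (C α * T 1 + C (1 - α)) ^ (n + r) * (C α * T (-1) + C (1 - α)) ^ n

lemma competeGenFun_succ (α : ℝ) (r n : ℕ) :
    competeGenFun α r (n + 1) =
      competeGenFun α r n * symmKernel (α * (1 - α)) (α ^ 2 + (1 - α) ^ 2) := by
  have hT : (T 1 * T (-1) : ℝ[T;T⁻¹]) = 1 := by rw [← T_add, add_neg_cancel, T_zero]
  rw [competeGenFun, competeGenFun, symmKernel, add_right_comm, pow_succ, pow_succ]
  simp only [map_mul, map_add, map_pow]
  linear_combination
    (C α) ^ 2 * ((C α * T 1 + C (1 - α)) ^ (n + r) * (C α * T (-1) + C (1 - α)) ^ n) * hT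

lemma competeProb_eq_tailSum (α : ℝ) (r d n : ℕ) :
    competeProb α r d n = tailSum d (competeGenFun α r n) := by
  rw [competeGenFun, C_mul_T_add_C_pow, C_mul_T_add_C_pow, sum_mul_sum, sum_comm, competeProb]
  have hmul (a b : ℝ) (m k : ℤ) : C a * T m * (C b * T k) = C (a * b) * T (m + k) := by
    rw [map_mul, T_add]; ring
  simp only [map_sum, hmul, tailSum_C_mul_T]
  refine sum_congr rfl fun i hi => ?_
  rw [← sum_filter]
  have hIcc : (range (n + r + 1)).filter (fun j : ℕ => (d : ℤ) ≤ j * 1 + i * -1) =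
      Icc (i + d) (n + r) := by
    ext j; simp only [mem_filter, mem_range, mem_Icc]; omega
  refine sum_congr hIcc.symm fun j hj => ?_
  rw [hIcc, mem_Icc] at hj
  rw [mem_range] at hi
  rw [show 2 * n + r - i - j = (n + r - j) + (n - i) by omega, pow_add, pow_add]
  ring

theorem competeProb_decreasing_of_large_alpha (r d : ℕ) (hd : 1 ≤ d) (hrd : 2 * d - 1 ≤ r)
    (α : ℝ) (hα0 : (d : ℝ) / (r + 1) < α) (hα1 : α < 1) :
    ∀ n : ℕ, competeProb α r d (n + 1) < competeProb α r d n := by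
  have hα : (d : ℝ) * (1 - α) < (r + 1 - d) * α := by
    rw [div_lt_iff₀ (by positivity)] at hα0
    linarith
  have hαpos : 0 < α := lt_of_le_of_lt (by positivity) hα0
  have hc : 0 < α * (1 - α) := mul_pos hαpos (sub_pos.2 hα1)
  have hdom (n : ℕ) : DominatesReflection (competeGenFun α r n) d := by
    induction n with
    | zero =>
      simpa [competeGenFun] using
        dominatesReflection_C_mul_T_one_add_C_pow hd (by omega) hαpos hα1 hα
    | succ n ih =>
      rw [competeGenFun_succ]
      exact ih.mul_symmKernel hc.le (by nlinarith [sq_nonneg (2 * α - 1)])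
  intro n
  rw [competeProb_eq_tailSum, competeProb_eq_tailSum, competeGenFun_succ, tailSum_mul_symmKernel,
    show 2 * (α * (1 - α)) + (α ^ 2 + (1 - α) ^ 2) = 1 by ring, one_mul]
  linarith [mul_pos hc (sub_pos.2 (hdom n).1)]
end

section
/- If r and d are positive integers with r ≥ 2d, and α satisfies (2d−1)/(2r) < α ≤ d/(r+1), then the sequence p_n^{r,d} is eventually strictly decreasing: there exists N such that p_{n+1}^{r,d} < p_n^{r,d} for all n ≥ N. -/
open Finset Filter Topology

/-!
Let `D_n(k) = P(S_{n+r} - S'_n = k)`, so that `p_n = ∑_{k ≥ d} D_n(k)`. One more pair of trials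
adds an independent `B - B'` with `P(B - B' = ±1) = α(1-α)`; summing the resulting recursion for
`D_{n+1}` over `k ≥ d` telescopes to `p_{n+1} - p_n = -α(1-α) (D_n(d) - D_n(d-1))`. By Fourier
inversion, `D_n(d) - D_n(d-1) = (2/π) ∫_0^π λ(θ)^n sin(θ/2) ψ(θ) dθ`, where
`λ(θ) = |α e^{iθ} + 1 - α|² = 1 - 2α(1-α)(1 - cos θ)` and
`ψ(θ) = Im((α e^{iθ} + 1 - α)^r e^{-i(d-1/2)θ})`.
As `λ` decreases strictly on `[0, π]`, for large `n` the integral is governed by small `θ`, where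
`ψ(θ) ≈ (rα - d + 1/2) θ > 0` because `α > (2d-1)/(2r)`.
-/

open Real
open Complex (I)

theorem integral_exp_int_mul_I (m : ℤ) :
    ∫ θ in -π..π, Complex.exp (m * θ * I) = ((if m = 0 then 2 * π else 0 : ℝ) : ℂ) := by
  split_ifs with hm
  · simp [hm, two_mul]
  · have hm' : (m : ℂ) * I ≠ 0 := mul_ne_zero (by exact_mod_cast hm) Complex.I_ne_zero
    simp_rw [mul_right_comm _ _ I]
    rw [integral_exp_mul_complex hm']
    have : Complex.exp (m * I * π) = Complex.exp (m * I * (-π : ℝ)) := by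
      rw [Complex.exp_eq_exp_iff_exists_int]
      exact ⟨m, by push_cast; ring⟩
    rw [this, sub_self, zero_div, Complex.ofReal_zero]

theorem integral_sum_exp_int_mul_I {ι : Type*} (s : Finset ι) (c : ι → ℂ) (m : ι → ℤ) :
    ∫ θ in -π..π, ∑ x ∈ s, c x * Complex.exp (m x * θ * I) =
      2 * π * ∑ x ∈ s, if m x = 0 then c x else 0 := by
  rw [intervalIntegral.integral_finsetSum
    fun x _ => (by fun_prop : Continuous _).intervalIntegrable _ _, mul_sum]
  refine sum_congr rfl fun x _ => ?_
  rw [intervalIntegral.integral_const_mul, integral_exp_int_mul_I]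
  split_ifs <;> push_cast <;> ring

theorem integral_symmetric_eq_two_mul_of_even {f : ℝ → ℝ} (hf : Continuous f)
    (heven : ∀ x, f (-x) = f x) (a : ℝ) : ∫ x in -a..a, f x = 2 * ∫ x in 0..a, f x := by
  rw [← intervalIntegral.integral_add_adjacent_intervals (b := 0) (hf.intervalIntegrable _ _)
    (hf.intervalIntegrable _ _), two_mul]
  congr 1
  simpa [heven] using (intervalIntegral.integral_comp_neg (a := 0) (b := a) f).symm

theorem exp_mul_I_mul_exp_neg_mul_I (θ : ℝ) : Complex.exp (θ * I) * Complex.exp (-θ * I) = 1 := by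
  rw [← Complex.exp_add, ← Complex.exp_zero]; ring_nf

theorem sum_range_shift_int {M : Type*} [AddCommMonoid M] (g : ℤ → M) (s : ℤ) (N : ℕ) :
    ∑ m ∈ range N, g (s + m + 1) + g s = ∑ m ∈ range N, g (s + m) + g (s + N) := by
  rw [← sum_range_succ, sum_range_succ']
  simp only [Nat.cast_add, Nat.cast_one, Nat.cast_zero, add_zero, add_assoc]

theorem HasDerivAt.eventually_pos_nhdsGT {f : ℝ → ℝ} {f' x : ℝ} (hf : HasDerivAt f f' x)
    (hf' : 0 < f') (hx : f x = 0) : ∀ᶠ y in 𝓝[>] x, 0 < f y := by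
  filter_upwards [((hasDerivAt_iff_tendsto_slope.mp hf).mono_left (nhdsGT_le_nhdsNE x)).eventually
    (eventually_gt_nhds hf'), self_mem_nhdsWithin] with y hy hxy
  exact pos_of_slope_pos hxy hy hx

theorem eventually_mul_pow_lt_mul_pow {s t A : ℝ} (B : ℝ) (ht : 0 ≤ t) (hts : t < s) (hA : 0 < A) :
    ∀ᶠ n : ℕ in atTop, B * t ^ n < A * s ^ n := by
  have hs : 0 < s := ht.trans_lt hts
  have hlim : Tendsto (fun n : ℕ => B * (t / s) ^ n) atTop (𝓝 0) := by
    simpa using (tendsto_pow_atTop_nhds_zero_of_lt_one (div_nonneg ht hs.le)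
      ((div_lt_one hs).mpr hts)).const_mul B
  filter_upwards [hlim.eventually (gt_mem_nhds hA)] with n hn
  rwa [div_pow, mul_div_assoc', div_lt_iff₀ (pow_pos hs n)] at hn

section PowMulIntegral

variable {f g : ℝ → ℝ} {u v : ℝ}

theorem mul_pow_mul_le_integral_pow_mul {K : ℝ} (n : ℕ) (huv : u ≤ v)
    (hf0 : ∀ x ∈ Set.Icc u v, 0 ≤ f x) (hfa : AntitoneOn f (Set.Icc u v)) (hK : 0 ≤ K)
    (hgK : ∀ x ∈ Set.Icc u v, K ≤ g x)
    (hint : IntervalIntegrable (fun x => f x ^ n * g x) MeasureTheory.volume u v) :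
    (v - u) * (f v ^ n * K) ≤ ∫ x in u..v, f x ^ n * g x := by
  rw [← smul_eq_mul, ← intervalIntegral.integral_const]
  refine intervalIntegral.integral_mono_on huv intervalIntegrable_const hint fun x hx => ?_
  have hv : v ∈ Set.Icc u v := ⟨huv, le_rfl⟩
  exact mul_le_mul (pow_le_pow_left₀ (hf0 v hv) (hfa hx hv hx.2) n) (hgK x hx) hK
    (pow_nonneg (hf0 x hx) n)

theorem abs_integral_pow_mul_le {C : ℝ} (n : ℕ) (huv : u ≤ v)
    (hf0 : ∀ x ∈ Set.Icc u v, 0 ≤ f x) (hfa : AntitoneOn f (Set.Icc u v))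
    (hC : ∀ x ∈ Set.Icc u v, |g x| ≤ C) :
    |∫ x in u..v, f x ^ n * g x| ≤ (v - u) * (f u ^ n * C) := by
  have hu : u ∈ Set.Icc u v := ⟨le_rfl, huv⟩
  have h := intervalIntegral.norm_integral_le_of_norm_le_const (a := u) (b := v)
    (f := fun x => f x ^ n * g x) (C := f u ^ n * C) fun x hx => by
      rw [Set.uIoc_of_le huv] at hx
      have hx' : x ∈ Set.Icc u v := ⟨hx.1.le, hx.2⟩
      rw [Real.norm_eq_abs, abs_mul, abs_pow, abs_of_nonneg (hf0 x hx')]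
      exact mul_le_mul (pow_le_pow_left₀ (hf0 x hx') (hfa hu hx' hx.1.le) n) (hC x hx')
        (abs_nonneg _) (pow_nonneg (hf0 u hu) n)
  rwa [abs_of_nonneg (sub_nonneg.mpr huv), Real.norm_eq_abs, mul_comm] at h

end PowMulIntegral

/-- Laplace's method at an endpoint: `f ^ n` concentrates near the maximum point `a` of `f`. -/
theorem eventually_integral_pow_mul_pos {f g : ℝ → ℝ} {a b : ℝ} (hab : a < b)
    (hf : ContinuousOn f (Set.Icc a b)) (hg : ContinuousOn g (Set.Icc a b))
    (hf0 : ∀ x ∈ Set.Icc a b, 0 ≤ f x) (hfa : StrictAntiOn f (Set.Icc a b))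
    (hg0 : ∀ᶠ x in 𝓝[>] a, 0 < g x) :
    ∀ᶠ n : ℕ in atTop, 0 < ∫ x in a..b, f x ^ n * g x := by
  obtain ⟨c', hac', hc'⟩ := mem_nhdsGT_iff_exists_Ioc_subset.mp hg0
  obtain ⟨c, hac, hcb, hgc⟩ : ∃ c, a < c ∧ c ≤ b ∧ ∀ x ∈ Set.Ioc a c, 0 < g x :=
    ⟨min c' b, lt_min hac' hab, min_le_right _ _,
      fun x hx => hc' ⟨hx.1, hx.2.trans (min_le_left _ _)⟩⟩
  obtain ⟨e, hae, hec⟩ := exists_between hac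
  obtain ⟨m, ham, hme⟩ := exists_between hae
  have hsub : ∀ {u v}, a ≤ u → v ≤ b → Set.Icc u v ⊆ Set.Icc a b :=
    fun hu hv => Set.Icc_subset_Icc hu hv
  have hint : ∀ n {u v}, a ≤ u → v ≤ b → u ≤ v →
      IntervalIntegrable (fun x => f x ^ n * g x) MeasureTheory.volume u v :=
    fun n u v hu hv huv => (((hf.pow n).mul hg).mono
      ((Set.uIcc_of_le huv).symm ▸ hsub hu hv)).intervalIntegrable
  obtain ⟨x₀, hx₀, hmin⟩ := isCompact_Icc.exists_isMinOn (Set.nonempty_Icc.mpr hme.le)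
    (hg.mono (hsub ham.le (hec.le.trans hcb)))
  have hK : 0 < g x₀ := hgc x₀ ⟨ham.trans_le hx₀.1, hx₀.2.trans hec.le⟩
  obtain ⟨C, hC⟩ := isCompact_Icc.exists_bound_of_continuousOn (hg.mono (hsub hac.le le_rfl))
  have hfe : f c < f e := hfa ⟨hae.le, hec.le.trans hcb⟩ ⟨hac.le, hcb⟩ hec
  filter_upwards [eventually_mul_pow_lt_mul_pow ((b - c) * C) (hf0 c ⟨hac.le, hcb⟩) hfe
    (mul_pos (sub_pos.mpr hme) hK)] with n hn
  have hbulk := mul_pow_mul_le_integral_pow_mul n hme.le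
    (fun x hx => hf0 x (hsub ham.le (hec.le.trans hcb) hx))
    (hfa.antitoneOn.mono (hsub ham.le (hec.le.trans hcb))) hK.le (fun x hx => hmin hx)
    (hint n ham.le (hec.le.trans hcb) hme.le)
  have hhead : ∫ x in m..e, f x ^ n * g x ≤ ∫ x in a..c, f x ^ n * g x :=
    intervalIntegral.integral_mono_interval ham.le hme.le hec.le
      (MeasureTheory.ae_restrict_of_forall_mem measurableSet_Ioc fun x hx =>
        mul_nonneg (pow_nonneg (hf0 x ⟨hx.1.le, hx.2.trans hcb⟩) n) (hgc x hx).le)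
      (hint n le_rfl hcb hac.le)
  have htail := abs_integral_pow_mul_le n hcb (fun x hx => hf0 x (hsub hac.le le_rfl hx))
    (hfa.antitoneOn.mono (hsub hac.le le_rfl))
    (fun x hx => (Real.norm_eq_abs (g x)) ▸ hC x hx)
  rw [← intervalIntegral.integral_add_adjacent_intervals (hint n le_rfl hcb hac.le)
    (hint n hac.le le_rfl hcb)]
  nlinarith [neg_abs_le (∫ x in c..b, f x ^ n * g x)]

noncomputable def bernoulliCharFun (α θ : ℝ) : ℂ := α * Complex.exp (θ * I) + (1 - α)

theorem bernoulliCharFun_pow (α θ : ℝ) (N : ℕ) :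
    bernoulliCharFun α θ ^ N = ∑ j ∈ range (N + 1),
      ((N.choose j * α ^ j * (1 - α) ^ (N - j) : ℝ) : ℂ) * Complex.exp (j * θ * I) := by
  rw [bernoulliCharFun, add_pow]
  refine sum_congr rfl fun j _ => ?_
  rw [mul_pow, ← Complex.exp_nat_mul]
  push_cast
  ring_nf

theorem bernoulliCharFun_neg (α θ : ℝ) :
    bernoulliCharFun α (-θ) = starRingEnd ℂ (bernoulliCharFun α θ) := by
  simp [bernoulliCharFun, ← Complex.exp_conj]

noncomputable def bernoulliDiffCharFun (α θ : ℝ) : ℝ := 1 - 2 * (α * (1 - α)) * (1 - Real.cos θ)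

@[fun_prop]
theorem continuous_bernoulliDiffCharFun (α : ℝ) : Continuous (bernoulliDiffCharFun α) := by
  unfold bernoulliDiffCharFun
  fun_prop

theorem bernoulliCharFun_mul_neg (α θ : ℝ) :
    bernoulliCharFun α θ * bernoulliCharFun α (-θ) = bernoulliDiffCharFun α θ := by
  have hcos : 2 * Complex.cos θ = Complex.exp (θ * I) + Complex.exp (-θ * I) := by
    rw [Complex.two_cos, neg_mul]
  simp only [bernoulliCharFun, bernoulliDiffCharFun]
  push_cast
  linear_combination α ^ 2 * exp_mul_I_mul_exp_neg_mul_I θ - α * (1 - α) * hcos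

theorem bernoulliDiffCharFun_nonneg {α : ℝ} (hα0 : 0 ≤ α) (hα1 : α ≤ 1) (θ : ℝ) :
    0 ≤ bernoulliDiffCharFun α θ := by
  unfold bernoulliDiffCharFun
  nlinarith [Real.neg_one_le_cos θ, mul_nonneg hα0 (sub_nonneg.mpr hα1), sq_nonneg (1 - 2 * α)]

theorem strictAntiOn_bernoulliDiffCharFun {α : ℝ} (hα0 : 0 < α) (hα1 : α < 1) :
    StrictAntiOn (bernoulliDiffCharFun α) (Set.Icc 0 π) := fun x hx y hy hxy => by
  unfold bernoulliDiffCharFun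
  nlinarith [Real.strictAntiOn_cos hx hy hxy, mul_pos hα0 (sub_pos.mpr hα1)]

-- `diffProb α r n k = P(S_{n+r} - S'_n = k)`
noncomputable def diffProb (α : ℝ) (r n : ℕ) (k : ℤ) : ℝ :=
  ∑ i ∈ range (n + 1), ∑ j ∈ range (n + r + 1),
    if (j : ℤ) = i + k then
      ((n + r).choose j : ℝ) * (n.choose i : ℝ) * α ^ (i + j) * (1 - α) ^ (2 * n + r - i - j)
    else 0

noncomputable def diffIntegrand (α : ℝ) (r n : ℕ) (k : ℤ) (θ : ℝ) : ℂ :=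
  bernoulliCharFun α θ ^ (n + r) * bernoulliCharFun α (-θ) ^ n * Complex.exp (-(k * θ) * I)

theorem continuous_diffIntegrand (α : ℝ) (r n : ℕ) (k : ℤ) :
    Continuous (diffIntegrand α r n k) := by
  unfold diffIntegrand bernoulliCharFun
  fun_prop

theorem diffProb_eq_integral (α : ℝ) (r n : ℕ) (k : ℤ) :
    (diffProb α r n k : ℂ) = (2 * π)⁻¹ * ∫ θ in -π..π, diffIntegrand α r n k θ := by
  have expand : ∀ θ : ℝ, diffIntegrand α r n k θ = ∑ p ∈ range (n + 1) ×ˢ range (n + r + 1),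
        (((n + r).choose p.2 * n.choose p.1 * α ^ (p.1 + p.2) * (1 - α) ^ (2 * n + r - p.1 - p.2)
          : ℝ) : ℂ) * Complex.exp ((p.2 - p.1 - k : ℤ) * θ * I) := by
    intro θ
    rw [diffIntegrand, bernoulliCharFun_pow, bernoulliCharFun_pow, sum_mul_sum, sum_mul,
      sum_product_right]
    refine sum_congr rfl fun j hj => ?_
    rw [sum_mul]
    refine sum_congr rfl fun i hi => ?_
    have hexp : 2 * n + r - i - j = (n + r - j) + (n - i) := by
      have := mem_range_succ_iff.mp hj; have := mem_range_succ_iff.mp hi; omega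
    have hE : Complex.exp (j * θ * I) * Complex.exp (i * (-θ : ℝ) * I) *
        Complex.exp (-(k * θ) * I) = Complex.exp ((j - i - k : ℤ) * θ * I) := by
      rw [← Complex.exp_add, ← Complex.exp_add]
      push_cast
      ring_nf
    rw [hexp, ← hE]
    push_cast
    ring
  simp_rw [expand]
  rw [integral_sum_exp_int_mul_I, ← mul_assoc, Complex.ofReal_inv, Complex.ofReal_mul,
    Complex.ofReal_ofNat,
    inv_mul_cancel₀ (mul_ne_zero two_ne_zero (Complex.ofReal_ne_zero.mpr pi_ne_zero)), one_mul,
    sum_product, diffProb, Complex.ofReal_sum]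
  refine sum_congr rfl fun i _ => ?_
  rw [Complex.ofReal_sum]
  refine sum_congr rfl fun j _ => ?_
  rw [apply_ite Complex.ofReal, Complex.ofReal_zero]
  exact if_congr (by omega) rfl rfl

theorem diffIntegrand_succ (α : ℝ) (r n : ℕ) (k : ℤ) (θ : ℝ) :
    diffIntegrand α r (n + 1) k θ = (α ^ 2 + (1 - α) ^ 2 : ℝ) * diffIntegrand α r n k θ +
      (α * (1 - α) : ℝ) * (diffIntegrand α r n (k - 1) θ + diffIntegrand α r n (k + 1) θ) := by
  have hprev : Complex.exp (-((k - 1 : ℤ) * θ) * I) =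
      Complex.exp (-(k * θ) * I) * Complex.exp (θ * I) := by
    rw [← Complex.exp_add]; push_cast; ring_nf
  have hnext : Complex.exp (-((k + 1 : ℤ) * θ) * I) =
      Complex.exp (-(k * θ) * I) * Complex.exp (-θ * I) := by
    rw [← Complex.exp_add]; push_cast; ring_nf
  simp only [diffIntegrand, hprev, hnext, show n + 1 + r = n + r + 1 by ring, pow_succ,
    bernoulliCharFun]
  push_cast
  linear_combination ((α * Complex.exp (θ * I) + (1 - α)) ^ (n + r) *
    (α * Complex.exp (-θ * I) + (1 - α)) ^ n * Complex.exp (-(k * θ) * I) * α ^ 2) *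
      exp_mul_I_mul_exp_neg_mul_I θ

theorem diffProb_succ (α : ℝ) (r n : ℕ) (k : ℤ) :
    diffProb α r (n + 1) k = (α ^ 2 + (1 - α) ^ 2) * diffProb α r n k +
      α * (1 - α) * (diffProb α r n (k - 1) + diffProb α r n (k + 1)) := by
  have hint : ∀ k, IntervalIntegrable (diffIntegrand α r n k) MeasureTheory.volume (-π) π :=
    fun k => (continuous_diffIntegrand α r n k).intervalIntegrable _ _
  apply Complex.ofReal_injective
  simp only [Complex.ofReal_add, Complex.ofReal_mul, diffProb_eq_integral]
  rw [intervalIntegral.integral_congr fun θ _ => diffIntegrand_succ α r n k θ,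
    intervalIntegral.integral_add ((hint k).const_mul _) (((hint _).add (hint _)).const_mul _),
    intervalIntegral.integral_const_mul, intervalIntegral.integral_const_mul,
    intervalIntegral.integral_add (hint _) (hint _)]
  push_cast
  ring

theorem diffProb_eq_zero_of_lt (α : ℝ) {r n : ℕ} {k : ℤ} (hk : (n + r : ℤ) < k) :
    diffProb α r n k = 0 :=
  sum_eq_zero fun _ _ => sum_eq_zero fun j hj =>
    if_neg (by have := mem_range_succ_iff.mp hj; omega)

theorem competeProb_eq_sum_diffProb (α : ℝ) (r d n : ℕ) {N : ℕ} (hN : n + r < d + N) :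
    competeProb α r d n = ∑ m ∈ range N, diffProb α r n (d + m) := by
  have inner : ∀ i j : ℕ, j ≤ n + r → ∀ t : ℝ,
      ∑ m ∈ range N, (if (j : ℤ) = i + (d + m) then t else 0) = if i + d ≤ j then t else 0 := by
    intro i j hj t
    split_ifs with h
    · rw [sum_eq_single (j - i - d) (fun m _ hm => if_neg (by omega))
        (fun hm => absurd (mem_range.mpr (by omega)) hm), if_pos (by omega)]
    · exact sum_eq_zero fun m _ => if_neg (by omega)
  simp only [diffProb]
  rw [sum_comm]
  refine sum_congr rfl fun i _ => ?_
  rw [sum_comm]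
  have hIcc : Icc (i + d) (n + r) = (range (n + r + 1)).filter (i + d ≤ ·) := by
    ext j; simp only [mem_Icc, mem_filter, mem_range]; omega
  rw [hIcc, sum_filter]
  exact sum_congr rfl fun j hj => (inner i j (mem_range_succ_iff.mp hj) _).symm

theorem competeProb_succ (α : ℝ) (r d n : ℕ) :
    competeProb α r d (n + 1) = competeProb α r d n -
      α * (1 - α) * (diffProb α r n d - diffProb α r n (d - 1)) := by
  set D := diffProb α r n
  set S := ∑ m ∈ range (n + r + 2), D (d + m)
  have hvan : ∀ k : ℤ, (n + r : ℤ) < k → D k = 0 := fun k hk => diffProb_eq_zero_of_lt α hk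
  have hnext : ∑ m ∈ range (n + r + 2), D (d + m + 1) = S - D d := by
    have h := sum_range_shift_int D d (n + r + 2)
    rw [hvan (d + (n + r + 2 : ℕ)) (by push_cast; omega)] at h
    linarith
  have hprev : ∑ m ∈ range (n + r + 2), D (d + m - 1) = S + D (d - 1) := by
    have h := sum_range_shift_int D (d - 1) (n + r + 2)
    simp only [sub_add_cancel, sub_add_eq_add_sub] at h
    rw [hvan (d + (n + r + 2 : ℕ) - 1) (by push_cast; omega)] at h
    linarith
  rw [competeProb_eq_sum_diffProb α r d (n + 1) (N := n + r + 2) (by omega),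
    competeProb_eq_sum_diffProb α r d n (N := n + r + 2) (by omega)]
  simp only [diffProb_succ]
  rw [sum_add_distrib, ← mul_sum, ← mul_sum, sum_add_distrib, hnext, hprev]
  ring

noncomputable def competeKernel (α : ℝ) (r d : ℕ) (θ : ℝ) : ℝ :=
  (bernoulliCharFun α θ ^ r * Complex.exp (-(((d : ℝ) - 1 / 2) * θ) * I)).im

@[fun_prop]
theorem continuous_competeKernel (α : ℝ) (r d : ℕ) : Continuous (competeKernel α r d) := by
  unfold competeKernel bernoulliCharFun
  fun_prop

theorem competeKernel_zero (α : ℝ) (r d : ℕ) : competeKernel α r d 0 = 0 := by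
  simp [competeKernel, bernoulliCharFun]

theorem competeKernel_neg (α : ℝ) (r d : ℕ) (θ : ℝ) :
    competeKernel α r d (-θ) = -competeKernel α r d θ := by
  have hconj : bernoulliCharFun α (-θ) ^ r * Complex.exp (-(((d : ℝ) - 1 / 2) * (-θ : ℝ)) * I) =
      starRingEnd ℂ (bernoulliCharFun α θ ^ r * Complex.exp (-(((d : ℝ) - 1 / 2) * θ) * I)) := by
    rw [map_mul, map_pow, ← bernoulliCharFun_neg, ← Complex.exp_conj]
    congr 2
    simp only [map_mul, map_neg, map_sub, map_div₀, map_one, map_ofNat, Complex.conj_ofReal,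
      Complex.conj_I]
    push_cast
    ring
  rw [competeKernel, hconj, Complex.conj_im, competeKernel]

theorem hasDerivAt_competeKernel_zero (α : ℝ) (r d : ℕ) :
    HasDerivAt (competeKernel α r d) (r * α - d + 1 / 2) 0 := by
  have hlin : ∀ c : ℂ, HasDerivAt (fun θ : ℝ => c * θ * I) (c * I) 0 := fun c => by
    simpa using ((hasDerivAt_id (0 : ℝ)).ofReal_comp.const_mul c).mul_const I
  have hchar : HasDerivAt (bernoulliCharFun α) (α * I) 0 := by
    have h := (((hlin 1).cexp).const_mul (α : ℂ)).add_const (1 - (α : ℂ))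
    simp only [one_mul, Complex.ofReal_zero, mul_zero, zero_mul, Complex.exp_zero] at h
    exact h
  have hphase : HasDerivAt (fun θ : ℝ => Complex.exp (-(((d : ℝ) - 1 / 2) * θ) * I))
      (-((d : ℂ) - 1 / 2) * I) 0 := by
    have h := (hlin (-((d : ℂ) - 1 / 2))).cexp
    simp only [Complex.ofReal_zero, mul_zero, zero_mul, Complex.exp_zero, one_mul, neg_mul] at h ⊢
    exact h
  have h := Complex.imCLM.hasFDerivAt.comp_hasDerivAt (0 : ℝ) ((hchar.pow r).mul hphase)
  refine h.congr_deriv ?_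
  simp [bernoulliCharFun, sub_eq_add_neg, add_assoc, add_comm]

theorem diffIntegrand_sub (α : ℝ) (r n d : ℕ) (θ : ℝ) :
    diffIntegrand α r n d θ - diffIntegrand α r n (d - 1) θ =
      -2 * I * ((bernoulliDiffCharFun α θ ^ n * Real.sin (θ / 2) : ℝ) : ℂ) *
        (bernoulliCharFun α θ ^ r * Complex.exp (-(((d : ℝ) - 1 / 2) * θ) * I)) := by
  have hexp : Complex.exp (-((d : ℤ) * θ) * I) - Complex.exp (-((d - 1 : ℤ) * θ) * I) =
      Complex.exp (-(((d : ℝ) - 1 / 2) * θ) * I) *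
        (Complex.exp (-(θ / 2 : ℝ) * I) - Complex.exp ((θ / 2 : ℝ) * I)) := by
    rw [mul_sub, ← Complex.exp_add, ← Complex.exp_add]
    push_cast
    ring_nf
  have hsin : Complex.exp (-(θ / 2 : ℝ) * I) - Complex.exp ((θ / 2 : ℝ) * I) =
      -2 * I * (Real.sin (θ / 2) : ℂ) := by
    rw [Complex.ofReal_sin]
    linear_combination I * Complex.two_sin (θ / 2 : ℝ) +
      (Complex.exp (-(θ / 2 : ℝ) * I) - Complex.exp ((θ / 2 : ℝ) * I)) * Complex.I_sq
  have hchar : bernoulliCharFun α θ ^ (n + r) * bernoulliCharFun α (-θ) ^ n =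
      (bernoulliDiffCharFun α θ : ℂ) ^ n * bernoulliCharFun α θ ^ r := by
    rw [← bernoulliCharFun_mul_neg]; ring
  simp only [diffIntegrand, ← mul_sub, hchar, hexp, hsin]
  rw [Complex.ofReal_mul, Complex.ofReal_pow]
  ring

theorem diffProb_sub_eq_integral (α : ℝ) (r n d : ℕ) :
    diffProb α r n d - diffProb α r n (d - 1) = 2 / π * ∫ θ in 0..π,
      bernoulliDiffCharFun α θ ^ n * (Real.sin (θ / 2) * competeKernel α r d θ) := by
  have hc : ((diffProb α r n d - diffProb α r n (d - 1) : ℝ) : ℂ) = ((2 * π)⁻¹ : ℝ) *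
      ∫ θ in -π..π, (diffIntegrand α r n d θ - diffIntegrand α r n (d - 1) θ) := by
    rw [intervalIntegral.integral_sub ((continuous_diffIntegrand ..).intervalIntegrable _ _)
      ((continuous_diffIntegrand ..).intervalIntegrable _ _), mul_sub, Complex.ofReal_sub,
      diffProb_eq_integral, diffProb_eq_integral]
  have hre := congrArg Complex.re hc
  rw [Complex.ofReal_re, Complex.re_ofReal_mul, ← RCLike.re_to_complex,
    ← intervalIntegral.intervalIntegral_re
      (f := fun θ => diffIntegrand α r n d θ - diffIntegrand α r n (d - 1) θ)
      (((continuous_diffIntegrand ..).sub (continuous_diffIntegrand ..)).intervalIntegrable _ _)]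
    at hre
  have hpt : ∀ θ, RCLike.re (diffIntegrand α r n d θ - diffIntegrand α r n (d - 1) θ) =
      2 * (bernoulliDiffCharFun α θ ^ n * (Real.sin (θ / 2) * competeKernel α r d θ)) := by
    intro θ
    rw [diffIntegrand_sub, RCLike.re_to_complex, competeKernel]
    simp only [Complex.mul_re, Complex.mul_im, Complex.ofReal_re, Complex.ofReal_im, Complex.I_re,
      Complex.I_im, Complex.neg_re, Complex.neg_im, Complex.re_ofNat, Complex.im_ofNat]
    ring
  have heven : ∀ θ,
      bernoulliDiffCharFun α (-θ) ^ n * (Real.sin (-θ / 2) * competeKernel α r d (-θ)) =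
        bernoulliDiffCharFun α θ ^ n * (Real.sin (θ / 2) * competeKernel α r d θ) := by
    intro θ
    rw [competeKernel_neg, neg_div, Real.sin_neg, bernoulliDiffCharFun, bernoulliDiffCharFun,
      Real.cos_neg]
    ring
  rw [hre, intervalIntegral.integral_congr fun θ _ => hpt θ, intervalIntegral.integral_const_mul,
    integral_symmetric_eq_two_mul_of_even (by fun_prop) heven]
  field_simp

theorem competeProb_eventually_decreasing (r d : ℕ) (hd : 1 ≤ d) (hrd : 2 * d ≤ r)
    (α : ℝ) (hα0 : (2 * (d : ℝ) - 1) / (2 * r) < α) (hα : α ≤ (d : ℝ) / (r + 1)) :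
    ∃ N : ℕ, ∀ n : ℕ, N ≤ n → competeProb α r d (n + 1) < competeProb α r d n := by
  have hr : (0 : ℝ) < r := by exact_mod_cast (by omega : 0 < r)
  have hdr : (d : ℝ) + 1 ≤ r + 1 := by exact_mod_cast (by omega : d + 1 ≤ r + 1)
  have hd1 : (1 : ℝ) ≤ d := by exact_mod_cast hd
  have hdrift : 0 < r * α - d + 1 / 2 := by
    rw [div_lt_iff₀ (by positivity)] at hα0; linarith
  have hαpos : 0 < α := by nlinarith
  have hα1 : α < 1 := by
    rw [le_div_iff₀ (by positivity)] at hα; nlinarith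
  have hg0 : ∀ᶠ θ in 𝓝[>] 0, 0 < Real.sin (θ / 2) * competeKernel α r d θ := by
    filter_upwards [(hasDerivAt_competeKernel_zero α r d).eventually_pos_nhdsGT hdrift
      (competeKernel_zero α r d), Ioo_mem_nhdsGT Real.two_pi_pos] with θ hψ hθ
    exact mul_pos (Real.sin_pos_of_pos_of_lt_pi (half_pos hθ.1) (by linarith [hθ.2])) hψ
  obtain ⟨N, hN⟩ := eventually_atTop.mp (eventually_integral_pow_mul_pos Real.pi_pos
    (by fun_prop) (by fun_prop)
    (fun θ _ => bernoulliDiffCharFun_nonneg hαpos.le hα1.le θ)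
    (strictAntiOn_bernoulliDiffCharFun hαpos hα1) hg0)
  refine ⟨N, fun n hn => ?_⟩
  rw [competeProb_succ, diffProb_sub_eq_integral]
  have := mul_pos (mul_pos hαpos (sub_pos.mpr hα1)) (mul_pos (by positivity : 0 < 2 / π) (hN n hn))
  linarith
end
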